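/- In one dimension: if X ~ N(0,σ²) and S ⊆ ℝ is measurable with P(X ∈ S) ≥ p, then P(X + δ ∈ S) ≥ Φ(Φ⁻¹(p) − δ/σ) for any δ ≥ 0, where Φ is the standard Gaussian CDF. -/

import Mathlib

open MeasureTheory ProbabilityTheory Real Set

/-- Standard Gaussian CDF. -/
noncomputable def Phi (t : ℝ) : ℝ :=
  ∫ u in Set.Iic t, (Real.sqrt (2 * Real.pi))⁻¹ * Real.exp (-u ^ 2 / 2)

/-- Inverse of the standard Gaussian CDF. -/
noncomputable def PhiInv : ℝ → ℝ := Function.invFun Phi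

/-- Isotropic Gaussian measure `N(x, σ²I)` on `ℝᵈ`. -/
noncomputable def gaussPi (d : ℕ) (x : EuclideanSpace ℝ (Fin d)) (σ : NNReal) :
    Measure (EuclideanSpace ℝ (Fin d)) :=
  Measure.map (MeasurableEquiv.toLp 2 (Fin d → ℝ))
    (Measure.pi fun i => gaussianReal (x i) (σ ^ 2))

/-
Neyman–Pearson argument. The likelihood ratio of `N(δ, σ²)` to `N(0, σ²)` is increasing in `x` when
`δ ≥ 0`, so among the sets of `N(0, σ²)`-mass at least `p`, the left half-line `(-∞, σ Φ⁻¹(p)]` of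
mass exactly `p` has the least `N(δ, σ²)`-mass, and that mass is `Φ(Φ⁻¹(p) − δ/σ)`.
-/

open scoped NNReal

section NeymanPearson

variable {α : Type*} [MeasurableSpace α] {μ : Measure α} {I S : Set α}

lemma setIntegral_le_setIntegral_of_nonpos_of_nonneg {g : α → ℝ} (hg : Integrable g μ)
    (hI : MeasurableSet I) (hS : MeasurableSet S) (hneg : ∀ x ∈ I, g x ≤ 0)
    (hpos : ∀ x ∉ I, 0 ≤ g x) : ∫ x in I, g x ∂μ ≤ ∫ x in S, g x ∂μ := by
  have hSI := integral_inter_add_sdiff hI hg.integrableOn (μ := μ) (s := S)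
  have hIS := integral_inter_add_sdiff hS hg.integrableOn (μ := μ) (s := I)
  have h₁ : 0 ≤ ∫ x in S \ I, g x ∂μ := setIntegral_nonneg (hS.diff hI) fun x hx ↦ hpos x hx.2
  have h₂ : ∫ x in I \ S, g x ∂μ ≤ 0 := setIntegral_nonpos (hI.diff hS) fun x hx ↦ hneg x hx.1
  rw [inter_comm] at hIS
  linarith

-- Neyman–Pearson: `I` is the region where the likelihood ratio `f₁ / f₀` is at most `b / a`.
lemma setIntegral_le_setIntegral_of_likelihoodRatio {f₀ f₁ : α → ℝ} (hf₀ : Integrable f₀ μ)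
    (hf₁ : Integrable f₁ μ) (hI : MeasurableSet I) (hS : MeasurableSet S) {a b : ℝ}
    (ha : 0 < a) (hb : 0 ≤ b) (hle : ∀ x ∈ I, a * f₁ x ≤ b * f₀ x)
    (hge : ∀ x ∉ I, b * f₀ x ≤ a * f₁ x) (h : ∫ x in I, f₀ x ∂μ ≤ ∫ x in S, f₀ x ∂μ) :
    ∫ x in I, f₁ x ∂μ ≤ ∫ x in S, f₁ x ∂μ := by
  have key : ∫ x in I, (a * f₁ x - b * f₀ x) ∂μ ≤ ∫ x in S, (a * f₁ x - b * f₀ x) ∂μ :=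
    setIntegral_le_setIntegral_of_nonpos_of_nonneg ((hf₁.const_mul a).sub (hf₀.const_mul b)) hI hS
    (fun x hx ↦ sub_nonpos.2 (hle x hx)) (fun x hx ↦ sub_nonneg.2 (hge x hx))
  simp only [integral_sub (hf₁.const_mul a).integrableOn (hf₀.const_mul b).integrableOn,
    integral_const_mul] at key
  nlinarith

end NeymanPearson

lemma gaussianReal_real_eq_integral (m : ℝ) {v : ℝ≥0} (hv : v ≠ 0) (s : Set ℝ) :
    (gaussianReal m v).real s = ∫ x in s, gaussianPDFReal m v x := by
  rw [measureReal_def, gaussianReal_apply_eq_integral m hv,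
    ENNReal.toReal_ofReal (integral_nonneg fun x ↦ gaussianPDFReal_nonneg _ _ _)]

lemma Phi_eq_integral_gaussianPDFReal (t : ℝ) : Phi t = ∫ u in Iic t, gaussianPDFReal 0 1 u := by
  simp [Phi, gaussianPDFReal]

lemma Phi_eq_cdf : Phi = cdf (gaussianReal 0 1) := by
  ext t
  rw [cdf_eq_real, gaussianReal_real_eq_integral 0 one_ne_zero, Phi_eq_integral_gaussianPDFReal]

lemma continuous_Phi : Continuous Phi := by
  refine continuous_iff_continuousAt.2 fun t ↦ ?_
  have h := (integrable_gaussianPDFReal 0 1).integrableOn (s := Iic (t + 1))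
  simp_rw [funext Phi_eq_integral_gaussianPDFReal]
  exact (h.continuousOn_Iic_primitive_Iic).continuousAt (Iic_mem_nhds (by linarith))

lemma Phi_PhiInv {p : ℝ} (hp : p ∈ Ioo (0 : ℝ) 1) : Phi (PhiInv p) = p := by
  refine Function.invFun_eq ?_
  obtain ⟨a, ha⟩ : ∃ a, Phi a < p :=
    ((Phi_eq_cdf ▸ tendsto_cdf_atBot _).eventually_lt_const hp.1).exists
  obtain ⟨b, hb⟩ : ∃ b, p < Phi b :=
    ((Phi_eq_cdf ▸ tendsto_cdf_atTop _).eventually_const_lt hp.2).exists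
  exact intermediate_value_univ a b continuous_Phi ⟨ha.le, hb.le⟩

lemma gaussianReal_real_Iic (m : ℝ) {σ : ℝ≥0} (hσ : σ ≠ 0) (t : ℝ) :
    (gaussianReal m (σ ^ 2)).real (Iic t) = Phi ((t - m) / σ) := by
  have hσ' : (0 : ℝ) < σ := NNReal.coe_pos.2 (pos_iff_ne_zero.2 hσ)
  have hmap : ((gaussianReal 0 1).map ((σ : ℝ) * ·)).map (· + m) = gaussianReal m (σ ^ 2) := by
    rw [gaussianReal_map_const_mul, gaussianReal_map_add_const]
    congr 1
    · ring
    · ext; simp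
  rw [Phi_eq_cdf, cdf_eq_real, ← hmap, map_measureReal_apply (by fun_prop) measurableSet_Iic,
    map_measureReal_apply (by fun_prop) (measurableSet_Iic.preimage (by fun_prop))]
  congr 1
  ext x
  simp [le_div_iff₀' hσ', le_sub_iff_add_le]

lemma gaussianReal_real_preimage_add_const (m : ℝ) (v : ℝ≥0) (δ : ℝ) {S : Set ℝ}
    (hS : MeasurableSet S) :
    (gaussianReal m v).real ((· + δ) ⁻¹' S) = (gaussianReal (m + δ) v).real S := by
  rw [← gaussianReal_map_add_const, map_measureReal_apply (measurable_add_const δ) hS]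

-- Monotone likelihood ratio: `x ↦ gaussianPDFReal m₁ v x / gaussianPDFReal m₀ v x` is monotone.
lemma gaussianPDFReal_mul_le_mul_of_le {m₀ m₁ : ℝ} (hm : m₀ ≤ m₁) (v : ℝ≥0) {x t : ℝ} (hxt : x ≤ t) :
    gaussianPDFReal m₁ v x * gaussianPDFReal m₀ v t ≤
      gaussianPDFReal m₁ v t * gaussianPDFReal m₀ v x := by
  simp only [gaussianPDFReal]
  have key : -(x - m₁) ^ 2 / (2 * v) + -(t - m₀) ^ 2 / (2 * v) ≤
      -(t - m₁) ^ 2 / (2 * v) + -(x - m₀) ^ 2 / (2 * v) := by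
    rw [← add_div, ← add_div]
    exact div_le_div_of_nonneg_right (by nlinarith) (by positivity)
  have := Real.exp_le_exp.2 key
  rw [Real.exp_add, Real.exp_add] at this
  have h0 : 0 ≤ (√(2 * π * v))⁻¹ * (√(2 * π * v))⁻¹ := by positivity
  nlinarith

lemma gaussianReal_real_Iic_le_of_mean_le {m₀ m₁ : ℝ} (hm : m₀ ≤ m₁) {v : ℝ≥0} (hv : v ≠ 0)
    (t : ℝ) {S : Set ℝ} (hS : MeasurableSet S)
    (h : (gaussianReal m₀ v).real (Iic t) ≤ (gaussianReal m₀ v).real S) :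
    (gaussianReal m₁ v).real (Iic t) ≤ (gaussianReal m₁ v).real S := by
  simp only [gaussianReal_real_eq_integral _ hv] at h ⊢
  refine setIntegral_le_setIntegral_of_likelihoodRatio (integrable_gaussianPDFReal m₀ v)
    (integrable_gaussianPDFReal m₁ v) measurableSet_Iic hS (gaussianPDFReal_pos m₀ v t hv)
    (gaussianPDFReal_nonneg m₁ v t) (fun x hx ↦ ?_) (fun x hx ↦ ?_) h
  · linarith [gaussianPDFReal_mul_le_mul_of_le hm v (mem_Iic.1 hx)]
  · linarith [gaussianPDFReal_mul_le_mul_of_le hm v (not_le.1 hx).le]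

/-- One-dimensional Gaussian shift bound: if `P(X ∈ S) ≥ p` for `X ~ N(0,σ²)`,
then `P(X + δ ∈ S) ≥ Φ(Φ⁻¹(p) − δ/σ)` for any `δ ≥ 0`. -/
theorem stmt_2 (σ : NNReal) (hσ : 0 < σ) (S : Set ℝ) (hS : MeasurableSet S)
    (p : ℝ) (hp : p ∈ Set.Ioo (0 : ℝ) 1)
    (h : ((gaussianReal 0 (σ ^ 2)) S).toReal ≥ p) (δ : ℝ) (hδ : 0 ≤ δ) :
    ((gaussianReal 0 (σ ^ 2)) {z | z + δ ∈ S}).toReal ≥ Phi (PhiInv p - δ / σ) := by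
  have hσ' : (σ : ℝ) ≠ 0 := NNReal.coe_ne_zero.2 hσ.ne'
  have h₀ : (gaussianReal 0 (σ ^ 2)).real (Iic (σ * PhiInv p)) = p := by
    rw [gaussianReal_real_Iic 0 hσ.ne', sub_zero, mul_div_cancel_left₀ _ hσ', Phi_PhiInv hp]
  have h₁ : (gaussianReal δ (σ ^ 2)).real (Iic (σ * PhiInv p)) = Phi (PhiInv p - δ / σ) := by
    rw [gaussianReal_real_Iic δ hσ.ne']
    congr 1
    field_simp
  change (gaussianReal 0 (σ ^ 2)).real ((· + δ) ⁻¹' S) ≥ _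
  rw [gaussianReal_real_preimage_add_const 0 _ δ hS, zero_add, ← h₁]
  exact gaussianReal_real_Iic_le_of_mean_le hδ (pow_ne_zero 2 hσ.ne') _ hS (h₀.trans_le h)
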